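/- arXiv:2302.02286 — 3 statements merged into one kernel-verified Lean document; each statement's English description precedes it below -/
import Mathlib

section
/- The optimal subsampling probabilities π^opt are feasible (π_i^opt > 0 for all i, Σ_{i∈S_0} π_i^opt = 1−δ, Σ_{i∈S_1} π_i^opt = δ) and minimize the objective: tr(V)(π^opt) ≤ tr(V)(π) for every feasible π. -/
open Finset

/-- On a nonempty group `S` with positive costs `c`, the value of `∑ c i / πopt i` where
`πopt i = t * √(c i) / T` equals `T^2 / t`, with `T = ∑ √(c i)`. -/
lemma opt_group_sum {N : ℕ} (S : Finset (Fin N)) (hS : S.Nonempty) (c : Fin N → ℝ)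
    (hc : ∀ i ∈ S, 0 < c i) (t : ℝ) (ht : 0 < t) (πopt : Fin N → ℝ)
    (hopt : ∀ i ∈ S, πopt i = t * Real.sqrt (c i) / ∑ j ∈ S, Real.sqrt (c j)) :
    ∑ i ∈ S, c i / πopt i = (∑ j ∈ S, Real.sqrt (c j)) ^ 2 / t := by
  set T := ∑ j ∈ S, Real.sqrt (c j) with hT
  have hTpos : 0 < T := by
    obtain ⟨i, hi⟩ := hS
    exact Finset.sum_pos' (fun j _ => Real.sqrt_nonneg _)
      ⟨i, hi, Real.sqrt_pos.mpr (hc i hi)⟩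
  have step : ∑ i ∈ S, c i / πopt i = ∑ i ∈ S, Real.sqrt (c i) * (T / t) := by
    refine Finset.sum_congr rfl fun i hi => ?_
    rw [hopt i hi]
    have hci : 0 < c i := hc i hi
    have hsq : Real.sqrt (c i) * Real.sqrt (c i) = c i := Real.mul_self_sqrt hci.le
    have hs : Real.sqrt (c i) ≠ 0 := ne_of_gt (Real.sqrt_pos.mpr hci)
    rw [div_eq_iff (by positivity)]
    field_simp
    linear_combination (-1 : ℝ) * hsq
    
  rw [step, ← Finset.sum_mul]
  rw [← hT]
  ring

/-- Cauchy–Schwarz (Sedrakyan) lower bound for a group. -/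
lemma group_lower_bound {N : ℕ} (S : Finset (Fin N)) (c π : Fin N → ℝ)
    (hc : ∀ i ∈ S, 0 ≤ c i) (hπ : ∀ i ∈ S, 0 < π i) :
    (∑ j ∈ S, Real.sqrt (c j)) ^ 2 / (∑ i ∈ S, π i) ≤ ∑ i ∈ S, c i / π i := by
  have h := Finset.sq_sum_div_le_sum_sq_div S (fun i => Real.sqrt (c i)) hπ
  refine h.trans_eq ?_
  refine Finset.sum_congr rfl fun i hi => ?_
  rw [Real.sq_sqrt (hc i hi)]

/-- The optimal subsampling probabilities `π^opt` are feasible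
(`π^opt i > 0`, `∑_{i ∈ S₀} π^opt i = 1 - δ`, `∑_{i ∈ S₁} π^opt i = δ`)
and minimize the objective `tr(V)(π) = (1/N²) ∑ i, c i / π i` over the feasible set. -/
theorem optimal_subsampling_feasible_and_minimizes
    (N p : ℕ) (S0 S1 : Finset (Fin N))
    (hpart : S0 ∪ S1 = Finset.univ) (hdisj : Disjoint S0 S1)
    (hS0 : S0.Nonempty) (hS1 : S1.Nonempty)
    (δ : ℝ) (hδ0 : 0 < δ) (hδ1 : δ < 1)
    (q v : Fin N → EuclideanSpace ℝ (Fin p))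
    (hq : ∀ i ∈ S0, q i ≠ 0)
    (hv : ∀ i ∈ S1, 0 < ‖v i‖ ^ 2 + ‖q i‖ ^ 2)
    (c : Fin N → ℝ)
    (hc : ∀ i, c i = if i ∈ S0 then ‖q i‖ ^ 2 else ‖v i‖ ^ 2 + ‖q i‖ ^ 2)
    (πopt : Fin N → ℝ)
    (hopt0 : ∀ i ∈ S0,
      πopt i = (1 - δ) * Real.sqrt (c i) / ∑ j ∈ S0, Real.sqrt (c j))
    (hopt1 : ∀ i ∈ S1,
      πopt i = δ * Real.sqrt (c i) / ∑ j ∈ S1, Real.sqrt (c j)) :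
    ((∀ i, 0 < πopt i) ∧ (∑ i ∈ S0, πopt i = 1 - δ) ∧ (∑ i ∈ S1, πopt i = δ)) ∧
    (∀ π : Fin N → ℝ, (∀ i, 0 < π i) →
      (∑ i ∈ S0, π i = 1 - δ) → (∑ i ∈ S1, π i = δ) →
      (1 / (N : ℝ) ^ 2) * ∑ i, c i / πopt i ≤ (1 / (N : ℝ) ^ 2) * ∑ i, c i / π i) := by
  have hδ1' : 0 < 1 - δ := by linarith
  -- positivity of c on each group
  have hc0 : ∀ i ∈ S0, 0 < c i := by
    intro i hi
    rw [hc i, if_pos hi]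
    exact pow_pos (norm_pos_iff.mpr (hq i hi)) 2
  have hc1 : ∀ i ∈ S1, 0 < c i := by
    intro i hi
    rw [hc i, if_neg (fun h0 => (Finset.disjoint_left.mp hdisj h0) hi)]
    exact hv i hi
  set T0 := ∑ j ∈ S0, Real.sqrt (c j) with hT0
  set T1 := ∑ j ∈ S1, Real.sqrt (c j) with hT1
  have hT0pos : 0 < T0 := by
    obtain ⟨i, hi⟩ := hS0
    exact Finset.sum_pos' (fun j _ => Real.sqrt_nonneg _)
      ⟨i, hi, Real.sqrt_pos.mpr (hc0 i hi)⟩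
  have hT1pos : 0 < T1 := by
    obtain ⟨i, hi⟩ := hS1
    exact Finset.sum_pos' (fun j _ => Real.sqrt_nonneg _)
      ⟨i, hi, Real.sqrt_pos.mpr (hc1 i hi)⟩
  have hmem : ∀ i : Fin N, i ∈ S0 ∨ i ∈ S1 := by
    intro i
    have : i ∈ S0 ∪ S1 := by rw [hpart]; exact Finset.mem_univ i
    exact Finset.mem_union.mp this
  have hπopt_pos : ∀ i, 0 < πopt i := by
    intro i
    rcases hmem i with hi | hi
    · rw [hopt0 i hi]
      have h1 : 0 < Real.sqrt (c i) := Real.sqrt_pos.mpr (hc0 i hi)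
      positivity
    · rw [hopt1 i hi]
      have h1 : 0 < Real.sqrt (c i) := Real.sqrt_pos.mpr (hc1 i hi)
      positivity
  have hsum0 : ∑ i ∈ S0, πopt i = 1 - δ := by
    have e : ∑ i ∈ S0, πopt i = ((1 - δ) / T0) * ∑ i ∈ S0, Real.sqrt (c i) := by
      rw [Finset.mul_sum]
      exact Finset.sum_congr rfl fun i hi => by rw [hopt0 i hi]; ring
    rw [e, ← hT0, div_mul_cancel₀ _ hT0pos.ne']
  have hsum1 : ∑ i ∈ S1, πopt i = δ := by
    have e : ∑ i ∈ S1, πopt i = (δ / T1) * ∑ i ∈ S1, Real.sqrt (c i) := by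
      rw [Finset.mul_sum]
      exact Finset.sum_congr rfl fun i hi => by rw [hopt1 i hi]; ring
    rw [e, ← hT1, div_mul_cancel₀ _ hT1pos.ne']
  refine ⟨⟨hπopt_pos, hsum0, hsum1⟩, ?_⟩
  intro π hπpos hπ0 hπ1
  have hNnn : (0:ℝ) ≤ 1 / (N : ℝ) ^ 2 := by positivity
  refine mul_le_mul_of_nonneg_left ?_ hNnn
  have hsplit : ∀ f : Fin N → ℝ, ∑ i, f i = ∑ i ∈ S0, f i + ∑ i ∈ S1, f i := by
    intro f
    rw [← hpart, Finset.sum_union hdisj]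
  rw [hsplit (fun i => c i / πopt i), hsplit (fun i => c i / π i)]
  have hopt_sum0 : ∑ i ∈ S0, c i / πopt i = T0 ^ 2 / (1 - δ) :=
    opt_group_sum S0 hS0 c hc0 (1 - δ) hδ1' πopt hopt0
  have hopt_sum1 : ∑ i ∈ S1, c i / πopt i = T1 ^ 2 / δ :=
    opt_group_sum S1 hS1 c hc1 δ hδ0 πopt hopt1
  have hlb0 : T0 ^ 2 / (1 - δ) ≤ ∑ i ∈ S0, c i / π i := by
    have := group_lower_bound S0 c π (fun i hi => (hc0 i hi).le) (fun i _ => hπpos i)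
    rwa [hπ0] at this
  have hlb1 : T1 ^ 2 / δ ≤ ∑ i ∈ S1, c i / π i := by
    have := group_lower_bound S1 c π (fun i hi => (hc1 i hi).le) (fun i _ => hπpos i)
    rwa [hπ1] at this
  rw [hopt_sum0, hopt_sum1]
  exact add_le_add hlb0 hlb1
end

section
/- The minimum value of the objective over the feasible set equals tr(V)(π^opt) = (1/N²) [ (Σ_{i∈S_0} √c_i)² / (1−δ) + (Σ_{i∈S_1} √c_i)² / δ ]. -/
/-- The minimum value of the objective `tr(V)(π) = (1/N²) ∑ i, c i / π i` over the
feasible set equals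
`tr(V)(π^opt) = (1/N²) [ (∑_{i ∈ S₀} √(c i))² / (1-δ) + (∑_{i ∈ S₁} √(c i))² / δ ]`. -/
theorem optimal_subsampling_minimum_value
    (N p : ℕ) (S0 S1 : Finset (Fin N))
    (hpart : S0 ∪ S1 = Finset.univ) (hdisj : Disjoint S0 S1)
    (hS0 : S0.Nonempty) (hS1 : S1.Nonempty)
    (δ : ℝ) (hδ0 : 0 < δ) (hδ1 : δ < 1)
    (q v : Fin N → EuclideanSpace ℝ (Fin p))
    (hq : ∀ i ∈ S0, q i ≠ 0)
    (hv : ∀ i ∈ S1, 0 < ‖v i‖ ^ 2 + ‖q i‖ ^ 2)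
    (c : Fin N → ℝ)
    (hc : ∀ i, c i = if i ∈ S0 then ‖q i‖ ^ 2 else ‖v i‖ ^ 2 + ‖q i‖ ^ 2)
    (πopt : Fin N → ℝ)
    (hopt0 : ∀ i ∈ S0,
      πopt i = (1 - δ) * Real.sqrt (c i) / ∑ j ∈ S0, Real.sqrt (c j))
    (hopt1 : ∀ i ∈ S1,
      πopt i = δ * Real.sqrt (c i) / ∑ j ∈ S1, Real.sqrt (c j)) :
    ((1 / (N : ℝ) ^ 2) * ∑ i, c i / πopt i
        = (1 / (N : ℝ) ^ 2) *
          ((∑ i ∈ S0, Real.sqrt (c i)) ^ 2 / (1 - δ)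
            + (∑ i ∈ S1, Real.sqrt (c i)) ^ 2 / δ)) ∧
    (∀ π : Fin N → ℝ, (∀ i, 0 < π i) →
      (∑ i ∈ S0, π i = 1 - δ) → (∑ i ∈ S1, π i = δ) →
      (1 / (N : ℝ) ^ 2) *
          ((∑ i ∈ S0, Real.sqrt (c i)) ^ 2 / (1 - δ)
            + (∑ i ∈ S1, Real.sqrt (c i)) ^ 2 / δ)
        ≤ (1 / (N : ℝ) ^ 2) * ∑ i, c i / π i) := by
  have hδ1' : 0 < 1 - δ := by linarith
  -- positivity of c
  have hcpos : ∀ i, 0 < c i := by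
    intro i
    rw [hc i]
    by_cases h0 : i ∈ S0
    · simp only [h0, if_true]
      have h2 : 0 < ‖q i‖ := norm_pos_iff.mpr (hq i h0)
      positivity
    · have h1 : i ∈ S1 := by
        have : i ∈ S0 ∪ S1 := hpart ▸ Finset.mem_univ i
        rcases Finset.mem_union.mp this with h | h
        · exact absurd h h0
        · exact h
      simpa [h0] using hv i h1
  have hsqrt : ∀ i, 0 < Real.sqrt (c i) := fun i => Real.sqrt_pos.mpr (hcpos i)
  have hA : 0 < ∑ j ∈ S0, Real.sqrt (c j) :=
    Finset.sum_pos (fun i _ => hsqrt i) hS0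
  have hB : 0 < ∑ j ∈ S1, Real.sqrt (c j) :=
    Finset.sum_pos (fun i _ => hsqrt i) hS1
  have hsq : ∀ i, Real.sqrt (c i) ^ 2 = c i := fun i => Real.sq_sqrt (hcpos i).le
  -- split sums over univ
  have hsplit : ∀ f : Fin N → ℝ, ∑ i, f i = (∑ i ∈ S0, f i) + ∑ i ∈ S1, f i := by
    intro f
    rw [← Finset.sum_union hdisj, hpart]
  constructor
  · congr 1
    rw [hsplit]
    have key0 : ∀ i ∈ S0, c i / πopt i
        = Real.sqrt (c i) * (∑ j ∈ S0, Real.sqrt (c j)) / (1 - δ) := by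
      intro i hi
      rw [hopt0 i hi]
      have h1 : Real.sqrt (c i) ≠ 0 := (hsqrt i).ne'
      field_simp
      linear_combination (-1 : ℝ) * hsq i
    have key1 : ∀ i ∈ S1, c i / πopt i
        = Real.sqrt (c i) * (∑ j ∈ S1, Real.sqrt (c j)) / δ := by
      intro i hi
      rw [hopt1 i hi]
      have h1 : Real.sqrt (c i) ≠ 0 := (hsqrt i).ne'
      field_simp
      linear_combination (-1 : ℝ) * hsq i
    rw [Finset.sum_congr rfl key0, Finset.sum_congr rfl key1,
      ← Finset.sum_div, ← Finset.sum_div, ← Finset.sum_mul, ← Finset.sum_mul,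
      ← sq, ← sq]
  · intro π hπ hπ0 hπ1
    have hN2 : (0:ℝ) ≤ 1 / (N : ℝ) ^ 2 := by positivity
    refine mul_le_mul_of_nonneg_left ?_ hN2
    rw [hsplit]
    have key : ∀ s : Finset (Fin N),
        (∑ i ∈ s, Real.sqrt (c i)) ^ 2 / (∑ i ∈ s, π i) ≤ ∑ i ∈ s, c i / π i := by
      intro s
      have := Finset.sq_sum_div_le_sum_sq_div s (fun i => Real.sqrt (c i))
        (fun i _ => hπ i)
      simpa [hsq] using this
    have k0 := key S0
    have k1 := key S1
    rw [hπ0] at k0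
    rw [hπ1] at k1
    linarith
end

section
/- Over the feasible set, the A-optimality objective G(π) = tr( H⁻¹ ( (1/N²) Σ_{i=1}^N A_i / π_i ) H⁻¹ ) is minimized at the probabilities defined by π_i = (1−δ) √(tr(H⁻¹ A_i H⁻¹)) / Σ_{j∈S_0} √(tr(H⁻¹ A_j H⁻¹)) for i ∈ S_0 and π_i = δ √(tr(H⁻¹ A_i H⁻¹)) / Σ_{j∈S_1} √(tr(H⁻¹ A_j H⁻¹)) for i ∈ S_1; that is, this π is feasible and G at this π is ≤ G(π') for every feasible π'. -/
/-- Over the feasible set, the A-optimality objective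
`G(π) = tr( H⁻¹ ((1/N²) ∑ i, A i / π i) H⁻¹ )` is minimized at the probabilities
`π i = (1-δ) √(tr(H⁻¹ A i H⁻¹)) / ∑_{j ∈ S₀} √(tr(H⁻¹ A j H⁻¹))` for `i ∈ S₀` and
`π i = δ √(tr(H⁻¹ A i H⁻¹)) / ∑_{j ∈ S₁} √(tr(H⁻¹ A j H⁻¹))` for `i ∈ S₁`. -/
theorem A_optimality_subsampling
    (N p : ℕ) (S0 S1 : Finset (Fin N))
    (hpart : S0 ∪ S1 = Finset.univ) (hdisj : Disjoint S0 S1)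
    (hS0 : S0.Nonempty) (hS1 : S1.Nonempty)
    (δ : ℝ) (hδ0 : 0 < δ) (hδ1 : δ < 1)
    (H : Matrix (Fin p) (Fin p) ℝ) (hHsymm : H.IsSymm) (hHpd : H.PosDef)
    (A : Fin N → Matrix (Fin p) (Fin p) ℝ)
    (hAsymm : ∀ i, (A i).IsSymm) (hApsd : ∀ i, (A i).PosSemidef)
    (htr : ∀ i, 0 < (H⁻¹ * A i * H⁻¹).trace)
    (G : (Fin N → ℝ) → ℝ)
    (hG : ∀ π, G π =
      (H⁻¹ * ((1 / (N : ℝ) ^ 2) • ∑ i, (π i)⁻¹ • A i) * H⁻¹).trace)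
    (πopt : Fin N → ℝ)
    (hopt0 : ∀ i ∈ S0, πopt i =
      (1 - δ) * Real.sqrt (H⁻¹ * A i * H⁻¹).trace
        / ∑ j ∈ S0, Real.sqrt (H⁻¹ * A j * H⁻¹).trace)
    (hopt1 : ∀ i ∈ S1, πopt i =
      δ * Real.sqrt (H⁻¹ * A i * H⁻¹).trace
        / ∑ j ∈ S1, Real.sqrt (H⁻¹ * A j * H⁻¹).trace) :
    ((∀ i, 0 < πopt i) ∧ (∑ i ∈ S0, πopt i = 1 - δ) ∧ (∑ i ∈ S1, πopt i = δ)) ∧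
    (∀ π : Fin N → ℝ, (∀ i, 0 < π i) →
      (∑ i ∈ S0, π i = 1 - δ) → (∑ i ∈ S1, π i = δ) →
      G πopt ≤ G π) := by
  set t : Fin N → ℝ := fun i => (H⁻¹ * A i * H⁻¹).trace with ht
  have hδ1' : 0 < 1 - δ := by linarith
  -- sums of square roots are positive
  have hsq : ∀ i, 0 < Real.sqrt (t i) := fun i => Real.sqrt_pos.2 (htr i)
  have hT0 : 0 < ∑ j ∈ S0, Real.sqrt (t j) :=
    Finset.sum_pos (fun j _ => hsq j) hS0
  have hT1 : 0 < ∑ j ∈ S1, Real.sqrt (t j) :=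
    Finset.sum_pos (fun j _ => hsq j) hS1
  -- positivity of πopt
  have hpos : ∀ i, 0 < πopt i := by
    intro i
    have : i ∈ S0 ∪ S1 := by rw [hpart]; exact Finset.mem_univ i
    rcases Finset.mem_union.1 this with h | h
    · rw [hopt0 i h]; exact div_pos (mul_pos hδ1' (hsq i)) hT0
    · rw [hopt1 i h]; exact div_pos (mul_pos hδ0 (hsq i)) hT1
  -- sums of πopt
  have hsum0 : ∑ i ∈ S0, πopt i = 1 - δ := by
    rw [Finset.sum_congr rfl (hopt0)]
    rw [← Finset.sum_div, ← Finset.mul_sum, mul_div_assoc, div_self hT0.ne', mul_one]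
  have hsum1 : ∑ i ∈ S1, πopt i = δ := by
    rw [Finset.sum_congr rfl (hopt1)]
    rw [← Finset.sum_div, ← Finset.mul_sum, mul_div_assoc, div_self hT1.ne', mul_one]
  refine ⟨⟨hpos, hsum0, hsum1⟩, ?_⟩
  intro π hπpos hπ0 hπ1
  -- rewrite G
  have hGval : ∀ ρ : Fin N → ℝ, G ρ = (1 / (N : ℝ) ^ 2) * ∑ i, (t i) / ρ i := by
    intro ρ
    rw [hG ρ]
    rw [Matrix.mul_smul, Matrix.smul_mul, Matrix.trace_smul, smul_eq_mul]
    congr 1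
    rw [Matrix.mul_sum, Matrix.sum_mul, Matrix.trace_sum]
    refine Finset.sum_congr rfl fun i _ => ?_
    rw [Matrix.mul_smul, Matrix.smul_mul, Matrix.trace_smul, smul_eq_mul, div_eq_inv_mul]
  have hN : (0:ℝ) < (1 / (N : ℝ) ^ 2) := by
    obtain ⟨i, -⟩ := hS0
    have hN0 : 0 < N := i.pos
    have : (0:ℝ) < (N:ℝ) := by exact_mod_cast hN0
    positivity
  rw [hGval, hGval]
  apply mul_le_mul_of_nonneg_left _ hN.le
  -- split sums over S0, S1
  have hsplit : ∀ ρ : Fin N → ℝ, ∑ i, t i / ρ i =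
      (∑ i ∈ S0, t i / ρ i) + ∑ i ∈ S1, t i / ρ i := by
    intro ρ
    rw [← Finset.sum_union hdisj, hpart]
  rw [hsplit, hsplit]
  -- value at optimum on S0
  have key : ∀ (S : Finset (Fin N)) (s : ℝ), 0 < s →
      (∀ i ∈ S, πopt i = s * Real.sqrt (t i) / ∑ j ∈ S, Real.sqrt (t j)) →
      (0 < ∑ j ∈ S, Real.sqrt (t j)) →
      (∀ ρ : Fin N → ℝ, (∀ i, 0 < ρ i) → (∑ i ∈ S, ρ i = s) →
        ∑ i ∈ S, t i / πopt i ≤ ∑ i ∈ S, t i / ρ i) := by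
    intro S s hs hform hT ρ hρ hρsum
    have hval : ∑ i ∈ S, t i / πopt i = (∑ j ∈ S, Real.sqrt (t j)) ^ 2 / s := by
      have : ∀ i ∈ S, t i / πopt i = Real.sqrt (t i) * (∑ j ∈ S, Real.sqrt (t j)) / s := by
        intro i hi
        rw [hform i hi, div_div_eq_mul_div,
          div_eq_div_iff (mul_pos hs (hsq i)).ne' hs.ne']
        have h2 := Real.mul_self_sqrt (htr i).le
        linear_combination (-(∑ j ∈ S, Real.sqrt (t j)) * s) * h2
      rw [Finset.sum_congr rfl this, ← Finset.sum_div, ← Finset.sum_mul, sq]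
    rw [hval]
    calc (∑ j ∈ S, Real.sqrt (t j)) ^ 2 / s
        = (∑ j ∈ S, Real.sqrt (t j)) ^ 2 / ∑ i ∈ S, ρ i := by rw [hρsum]
      _ ≤ ∑ i ∈ S, (Real.sqrt (t i)) ^ 2 / ρ i :=
          Finset.sq_sum_div_le_sum_sq_div S _ (fun i _ => hρ i)
      _ = ∑ i ∈ S, t i / ρ i := by
          refine Finset.sum_congr rfl fun i _ => ?_
          rw [Real.sq_sqrt (htr i).le]
  have h0 := key S0 (1 - δ) hδ1' hopt0 hT0 π hπpos hπ0
  have h1 := key S1 δ hδ0 hopt1 hT1 π hπpos hπ1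
  linarith
end
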